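/- arXiv:1406.7392 — 3 statements merged into one kernel-verified Lean document; each statement's English description precedes it below -/
import Mathlib

section
/- Let Λ_{Z₂}[t₁,...,t_k] ⊗ Z₂[K] carry the differential d_α defined by d_α(t_i) = Σ_{v_j ∈ α_i} v_j and d_α(v_σ) = Σ_{σ ⊂ ω, dim ω = dim σ + 1, I_α(ω) = I_α(σ)} v_ω (over Z₂, so signs can be ignored). Then d_α ∘ d_α = 0. -/
open Finset

/-- The free `ℤ₂`-module spanned by the multiplicative generators of
`Λ_{ℤ₂}[t₁,…,t_k] ⊗ ℤ₂[K]`: the exterior generators `t_i` (indexed by `Sum.inl i`)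
and the face-ring generators `v_σ` (indexed by `Sum.inr σ`, `σ` a simplex of `K`). -/
abbrev GenMod (V : Type*) (k : ℕ) := (Fin k ⊕ Finset V) →₀ ZMod 2

/-- The differential `d_α` on generators (over `ℤ₂`, so all signs are ignored):
`d_α(t_i) = Σ_{v ∈ α_i} v_{{v}}`, and
`d_α(v_σ) = Σ_{σ ⊂ ω ∈ K, dim ω = dim σ + 1, I_α(ω) = I_α(σ)} v_ω`,
where the partition `α` is encoded by `p : V → Fin k` and `I_α(σ) = p '' σ`. -/
noncomputable def dAlphaGen {V : Type*} [Fintype V] [DecidableEq V] {k : ℕ}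
    (K : Finset (Finset V)) (p : V → Fin k) :
    (Fin k ⊕ Finset V) → GenMod V k
  | Sum.inl i => ∑ v ∈ Finset.univ.filter (fun v => p v = i),
      Finsupp.single (Sum.inr {v}) 1
  | Sum.inr σ => ∑ v ∈ Finset.univ.filter
      (fun v => v ∉ σ ∧ insert v σ ∈ K ∧ (insert v σ).image p = σ.image p),
      Finsupp.single (Sum.inr (insert v σ)) 1

/-- The `ℤ₂`-linear extension of `d_α` to the span of the generators. -/
noncomputable def dAlpha {V : Type*} [Fintype V] [DecidableEq V] {k : ℕ}
    (K : Finset (Finset V)) (p : V → Fin k) :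
    GenMod V k →ₗ[ZMod 2] GenMod V k :=
  Finsupp.linearCombination (ZMod 2) (dAlphaGen K p)

/-!
Both `d_α(t_i)` and `d_α(v_σ)` are sums `∑_{v ∈ A} v_{σ ∪ {v}}` (with `σ = ∅` for `t_i`), so
applying `d_α` again gives a sum of `v_{σ ∪ {v, w}}` over ordered pairs `(v, w)` of distinct
vertices. The condition `I_α(σ ∪ {v}) = I_α(σ)` only says `p v ∈ p(σ)`, and `K` is closed under
subsets, so this set of pairs is symmetric and over `ℤ₂` the terms for `(v, w)` and `(w, v)` cancel.
-/

theorem Finset.sum_sum_eq_zero_of_symmetric {α M : Type*} [AddCommGroup M] [Module (ZMod 2) M]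
    (s : Finset α) (t : α → Finset α) (f : α → α → M)
    (hsymm : ∀ x ∈ s, ∀ y ∈ t x, y ∈ s ∧ x ∈ t y) (hirrefl : ∀ x ∈ s, x ∉ t x)
    (hf : ∀ x y, f x y = f y x) :
    ∑ x ∈ s, ∑ y ∈ t x, f x y = 0 := by
  rw [Finset.sum_sigma']
  refine Finset.sum_involution (fun x _ => ⟨x.2, x.1⟩) ?_ ?_ ?_ (fun _ _ => rfl)
  · rintro ⟨x, y⟩ -
    rw [hf y x]
    exact ZModModule.add_self _
  · rintro ⟨x, y⟩ hxy - hswap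
    simp only [Finset.mem_sigma] at hxy
    cases congrArg Sigma.fst hswap
    exact hirrefl x hxy.1 hxy.2
  · rintro ⟨x, y⟩ hxy
    simp only [Finset.mem_sigma] at hxy ⊢
    exact hsymm x hxy.1 y hxy.2

lemma Finset.image_insert_eq_self_iff {α β : Type*} [DecidableEq α] [DecidableEq β]
    (f : α → β) (a : α) (s : Finset α) :
    (insert a s).image f = s.image f ↔ f a ∈ s.image f := by
  rw [Finset.image_insert, Finset.insert_eq_self]

section Differential

variable {V : Type*} [Fintype V] [DecidableEq V] {k : ℕ} (K : Finset (Finset V)) (p : V → Fin k)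

def extensions (σ : Finset V) : Finset V :=
  Finset.univ.filter fun v => v ∉ σ ∧ insert v σ ∈ K ∧ (insert v σ).image p = σ.image p

variable {K p}

lemma mem_extensions {σ : Finset V} {v : V} :
    v ∈ extensions K p σ ↔ v ∉ σ ∧ insert v σ ∈ K ∧ p v ∈ σ.image p := by
  simp only [extensions, Finset.mem_filter, Finset.mem_univ, true_and,
    Finset.image_insert_eq_self_iff]

variable (K p)

lemma dAlphaGen_inl (i : Fin k) :
    dAlphaGen K p (Sum.inl i) =
      ∑ v ∈ Finset.univ.filter (fun v => p v = i), Finsupp.single (Sum.inr (insert v ∅)) 1 :=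
  rfl

lemma dAlphaGen_inr (σ : Finset V) :
    dAlphaGen K p (Sum.inr σ) =
      ∑ v ∈ extensions K p σ, Finsupp.single (Sum.inr (insert v σ)) 1 :=
  rfl

lemma dAlpha_single (a : Fin k ⊕ Finset V) (c : ZMod 2) :
    dAlpha K p (Finsupp.single a c) = c • dAlphaGen K p a := by
  simp [dAlpha, Finsupp.linearCombination_single]

lemma dAlpha_sum_single_insert_eq_zero (σ A : Finset V)
    (hA : ∀ v ∈ A, ∀ w ∈ extensions K p (insert v σ),
      w ∈ A ∧ v ∈ extensions K p (insert w σ)) :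
    dAlpha K p (∑ v ∈ A, Finsupp.single (Sum.inr (insert v σ)) 1) = 0 := by
  simp only [map_sum, dAlpha_single, one_smul, dAlphaGen_inr]
  refine Finset.sum_sum_eq_zero_of_symmetric A (fun v => extensions K p (insert v σ))
    (fun v w => Finsupp.single (Sum.inr (insert w (insert v σ))) 1) hA
    (fun v _ hv => (mem_extensions.mp hv).1 (Finset.mem_insert_self v σ)) ?_
  intro v w
  rw [Finset.insert_comm]

lemma dAlpha_dAlphaGen_inl (i : Fin k) : dAlpha K p (dAlphaGen K p (Sum.inl i)) = 0 := by
  rw [dAlphaGen_inl]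
  refine dAlpha_sum_single_insert_eq_zero K p ∅ _ fun v hv w hw => ?_
  simp only [Finset.mem_filter, Finset.mem_univ, true_and] at hv ⊢
  obtain ⟨hwv, hvwK, hpw⟩ := mem_extensions.mp hw
  have hpw : p w = i := by simpa [hv] using hpw
  refine ⟨hpw, mem_extensions.mpr ⟨?_, ?_, by simp [hv, hpw]⟩⟩
  · simpa [eq_comm] using hwv
  · rwa [Finset.insert_comm]

lemma dAlpha_dAlphaGen_inr (hsub : ∀ σ ∈ K, ∀ τ ⊆ σ, τ ∈ K) (σ : Finset V) :
    dAlpha K p (dAlphaGen K p (Sum.inr σ)) = 0 := by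
  rw [dAlphaGen_inr]
  refine dAlpha_sum_single_insert_eq_zero K p σ _ fun v hv w hw => ?_
  obtain ⟨hvσ, hvK, hpv⟩ := mem_extensions.mp hv
  obtain ⟨hwvσ, hwvK, hpw⟩ := mem_extensions.mp hw
  rw [Finset.mem_insert, not_or] at hwvσ
  rw [(Finset.image_insert_eq_self_iff p v σ).mpr hpv] at hpw
  refine ⟨mem_extensions.mpr ⟨hwvσ.2, hsub _ hwvK _ ?_, hpw⟩, mem_extensions.mpr ⟨?_, ?_, ?_⟩⟩
  · exact Finset.insert_subset_insert w (Finset.subset_insert v σ)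
  · simpa [Ne.symm hwvσ.1] using hvσ
  · rwa [Finset.insert_comm]
  · simpa [Finset.image_insert] using Or.inr hpv

lemma dAlpha_dAlphaGen (hsub : ∀ σ ∈ K, ∀ τ ⊆ σ, τ ∈ K) (a : Fin k ⊕ Finset V) :
    dAlpha K p (dAlphaGen K p a) = 0 := by
  cases a with
  | inl i => exact dAlpha_dAlphaGen_inl K p i
  | inr σ => exact dAlpha_dAlphaGen_inr K p hsub σ

end Differential

theorem stmt6_general {V : Type*} [Fintype V] [DecidableEq V] {k : ℕ}
    (K : Finset (Finset V))
    (hsub : ∀ σ ∈ K, ∀ τ ⊆ σ, τ ∈ K)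
    (p : V → Fin k) :
    ∀ m : GenMod V k, dAlpha K p (dAlpha K p m) = 0 := by
  have hsquare : dAlpha K p ∘ₗ dAlpha K p = 0 :=
    Finsupp.lhom_ext fun a c => by
      simp [dAlpha_single, dAlpha_dAlphaGen K p hsub a]
  exact fun m => LinearMap.congr_fun hsquare m

/-- For a finite simplicial complex `K` (closed under subsets, with all
vertices of `V` as vertices of `K`) with vertex partition `α` encoded by the
surjective map `p : V → Fin k`, the differential `d_α` on
`Λ_{ℤ₂}[t₁,…,t_k] ⊗ ℤ₂[K]`, given on generators by
`d_α(t_i) = Σ_{v_j ∈ α_i} v_j` and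
`d_α(v_σ) = Σ_{σ ⊂ ω, dim ω = dim σ + 1, I_α(ω) = I_α(σ)} v_ω`
(over `ℤ₂`, so signs can be ignored), satisfies `d_α ∘ d_α = 0`. -/
theorem stmt6 {V : Type*} [Fintype V] [DecidableEq V] {k : ℕ}
    (K : Finset (Finset V))
    (hsub : ∀ σ ∈ K, ∀ τ ⊆ σ, τ ∈ K)
    (hvert : ∀ v : V, {v} ∈ K)
    (p : V → Fin k) (hp : Function.Surjective p) :
    ∀ m : GenMod V k, dAlpha K p (dAlpha K p m) = 0 :=
  stmt6_general K hsub p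
end

section
/- For each L ⊂ [k], the map φ^L_α sending the dual basis element σ* of the simplicial cochain complex C*(K_{α,L}; k) (augmented, with σ ranging over all simplices of K_{α,L} including the empty simplex) to x^{Φ^{L∖I_α(σ)}_σ} is an isomorphism of cochain complexes onto C^{*,L}(X(K,λ_α); k), shifting degree by one: a simplicial cochain of degree q−1 maps to a cellular cochain of dimension q = rank(σ). -/
open Finset

/-- The incidence sign `ε(σ, ω)` for `ω = insert v σ`, `v ∉ σ`. -/
def epsSign {V : Type*} [DecidableEq V] [LinearOrder V] (σ : Finset V) (v : V) : ℤ :=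
  (-1) ^ (σ.filter (fun u => u < v)).card

/-- The differential of the augmented simplicial cochain complex of the subcomplex
`K_{α,L} = {σ ∈ K : I_α(σ) ⊆ L}`:
`d(σ*) = Σ_{σ ⊂ ω ∈ K_{α,L}, dim ω = dim σ + 1} ε(σ,ω) ω*`. -/
noncomputable def dSimp {V : Type*} [Fintype V] [DecidableEq V] [LinearOrder V]
    {k : ℕ} (K : Finset (Finset V)) (p : V → Fin k) (L : Finset (Fin k))
    (σ : Finset V) : Finset V →₀ ℤ :=
  ∑ v ∈ Finset.univ.filter
      (fun v => v ∉ σ ∧ insert v σ ∈ K ∧ (insert v σ).image p ⊆ L),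
    epsSign σ v • Finsupp.single (insert v σ) (1 : ℤ)

/-- The cellular cochain differential of `X(K, λ_α)` on the basis cochain
`x^{Φ^J_σ}` indexed by `b = (σ, J)`:
`d(x^{Φ^J_σ}) = Σ_{σ⊂ω∈K, dim ω = dim σ+1, I_α(ω) ⊆ I_α(σ)∪J}
  ε(σ,ω) · x^{Φ^{(I_α(σ)∪J) \ I_α(ω)}_ω}`. -/
noncomputable def dCellReal {V : Type*} [Fintype V] [DecidableEq V] [LinearOrder V]
    {k : ℕ} (K : Finset (Finset V)) (p : V → Fin k)
    (b : Finset V × Finset (Fin k)) : (Finset V × Finset (Fin k)) →₀ ℤ :=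
  ∑ v ∈ Finset.univ.filter
      (fun v => v ∉ b.1 ∧ insert v b.1 ∈ K ∧ p v ∈ b.1.image p ∪ b.2),
    epsSign b.1 v •
      Finsupp.single (insert v b.1, (b.1.image p ∪ b.2) \ (insert v b.1).image p) (1 : ℤ)

/-- Indexing a cell by `(σ, L \ I(σ))` loses nothing: `L = I(σ) ∪ J` with `J` disjoint from
`I(σ)` forces `J = L \ I(σ)`. -/
theorem bijOn_prod_sdiff_image {V ι : Type*} [DecidableEq ι] (K : Set (Finset V))
    (p : V → ι) (L : Finset ι) :
    Set.BijOn (fun σ : Finset V => (σ, L \ σ.image p))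
      {σ | σ ∈ K ∧ σ.image p ⊆ L}
      {b : Finset V × Finset ι | b.1 ∈ K ∧ Disjoint b.2 (b.1.image p) ∧ b.1.image p ∪ b.2 = L} := by
  refine ⟨?_, fun σ _ τ _ h => congrArg Prod.fst h, ?_⟩
  · rintro σ ⟨hK, hL⟩
    exact ⟨hK, sdiff_disjoint, union_sdiff_of_subset hL⟩
  · rintro ⟨σ, J⟩ ⟨hK, hdisj, hunion⟩
    refine ⟨σ, ⟨hK, hunion ▸ subset_union_left⟩, ?_⟩
    simp only [Prod.mk.injEq, true_and]
    rw [← hunion, union_sdiff_cancel_left hdisj.symm]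

/-- For `I(σ) ⊆ L` the cofaces `ω = σ ∪ {v}` admitted by the two differentials coincide
(`I(ω) ⊆ L` iff `p v ∈ I(σ) ∪ (L \ I(σ)) = L`), with the same signs. -/
theorem mapDomain_dSimp {V : Type*} [Fintype V] [DecidableEq V] [LinearOrder V] {k : ℕ}
    (K : Finset (Finset V)) (p : V → Fin k) (L : Finset (Fin k)) {σ : Finset V}
    (hL : σ.image p ⊆ L) :
    Finsupp.mapDomain (fun σ : Finset V => (σ, L \ σ.image p)) (dSimp K p L σ) =
      dCellReal K p (σ, L \ σ.image p) := by
  rw [dSimp, dCellReal, Finsupp.mapDomain_finsetSum]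
  refine sum_congr ?_ fun v _ => ?_
  · ext v
    simp only [mem_filter, mem_univ, true_and, image_insert, union_sdiff_of_subset hL,
      insert_subset_iff]
    tauto
  · rw [Finsupp.mapDomain_smul, Finsupp.mapDomain_single, union_sdiff_of_subset hL]

/-- On basis indices `φ^L_α` is `σ ↦ (σ, L \ I_α(σ))`, the index of `x^{Φ^{L∖I_α(σ)}_σ}`;
the cellular dimension of `(σ, J)` is `|σ|`. -/
theorem stmt14_general {V : Type*} [Fintype V] [DecidableEq V] [LinearOrder V] {k : ℕ}
    (K : Finset (Finset V))
    (p : V → Fin k) (L : Finset (Fin k)) :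
    Set.BijOn (fun σ : Finset V => (σ, L \ σ.image p))
        {σ : Finset V | σ ∈ K ∧ σ.image p ⊆ L}
        {b : Finset V × Finset (Fin k) |
          b.1 ∈ K ∧ Disjoint b.2 (b.1.image p) ∧ b.1.image p ∪ b.2 = L} ∧
      (∀ σ : Finset V, σ ∈ K → σ.image p ⊆ L →
        Finsupp.mapDomain (fun σ : Finset V => (σ, L \ σ.image p)) (dSimp K p L σ) =
          dCellReal K p (σ, L \ σ.image p)) ∧
      (∀ σ : Finset V, σ ∈ K → σ.image p ⊆ L →
        ((σ, L \ σ.image p) : Finset V × Finset (Fin k)).1.card = σ.card) :=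
  ⟨bijOn_prod_sdiff_image (K : Set (Finset V)) p L,
    fun _ _ hL => mapDomain_dSimp K p L hL, fun _ _ _ => rfl⟩

/-- For each `L ⊆ [k]`, the map `φ^L_α` sending the dual basis
cochain `σ*` of the augmented simplicial cochain complex of
`K_{α,L}` (with `σ` ranging over all simplices of `K_{α,L}`, including the empty
simplex) to `x^{Φ^{L∖I_α(σ)}_σ}` is an isomorphism of cochain complexes onto
`C^{*,L}(X(K,λ_α))`, shifting degree by one: a simplicial cochain of degree `q-1`
maps to a cellular cochain of dimension `q = rank σ`.  Concretely, writing
`g(σ) = (σ, L \ I_α(σ))` on basis indices: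
(i) `g` is a bijection from the simplices of `K_{α,L}` onto the basis
`{(σ,J) : σ ∈ K, J ∩ I_α(σ) = ∅, I_α(σ) ∪ J = L}` of `C^{*,L}(X(K,λ_α))`;
(ii) `φ^L_α = Finsupp.mapDomain g` intertwines the two differentials;
(iii) the image cell of a simplex `σ` has dimension `rank σ = |σ|` (one more
than the simplicial degree `|σ| - 1`). -/
theorem stmt14 {V : Type*} [Fintype V] [DecidableEq V] [LinearOrder V] {k : ℕ}
    (K : Finset (Finset V))
    (hsub : ∀ σ ∈ K, ∀ τ ⊆ σ, τ ∈ K)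
    (p : V → Fin k) (hp : Function.Surjective p) (L : Finset (Fin k)) :
    Set.BijOn (fun σ : Finset V => (σ, L \ σ.image p))
        {σ : Finset V | σ ∈ K ∧ σ.image p ⊆ L}
        {b : Finset V × Finset (Fin k) |
          b.1 ∈ K ∧ Disjoint b.2 (b.1.image p) ∧ b.1.image p ∪ b.2 = L} ∧
      (∀ σ : Finset V, σ ∈ K → σ.image p ⊆ L →
        Finsupp.mapDomain (fun σ : Finset V => (σ, L \ σ.image p)) (dSimp K p L σ) =
          dCellReal K p (σ, L \ σ.image p)) ∧
      (∀ σ : Finset V, σ ∈ K → σ.image p ⊆ L →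
        ((σ, L \ σ.image p) : Finset V × Finset (Fin k)).1.card = σ.card) :=
  stmt14_general K p L
end

section
/- For each L ⊂ [k], the map φ̂^L_α sending σ* to κ(σ,L)·y^{Φ^{L∖I_α(σ)}_σ} is a cochain complex isomorphism from the augmented simplicial cochain complex of K_{α,L} onto C^{*,L}(X(K,Λ_α); k); in particular κ(σ,L)·d(y^{Φ^{L∖I_α(σ)}_σ}) = Σ_{σ⊂ω∈K_{α,L}, dim ω = dim σ+1} κ(ω,L) ε(σ,ω) y^{Φ^{L∖I_α(ω)}_ω}. -/
/-!
On the basis cochain indexed by `(σ, L ∖ I_α(σ))` the label set `I_α(σ) ∪ J` appearing in the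
differential is `L` itself, so each coefficient `κ(i_α(v), L)` merges with `κ(σ, L)` into
`κ(σ ∪ {v}, L)`, the sign `κ` being a product over vertices. The bijection on basis indices
is inverted by the first projection, because `J` is recovered as `L ∖ I_α(σ)`.
-/

open Finset

/-- `κ(i, L) = (-1)^{|{j ∈ L : j < i}|}`. -/
def kappaIdx {k : ℕ} (i : Fin k) (L : Finset (Fin k)) : ℤ :=
  (-1) ^ (L.filter (fun j => j < i)).card

/-- `κ(σ, L) = Π_{v ∈ σ} κ(i_α(v), L)`, where `i_α(v) = p v`. -/
def kappaSimp {V : Type*} [DecidableEq V] {k : ℕ} (p : V → Fin k)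
    (σ : Finset V) (L : Finset (Fin k)) : ℤ :=
  ∏ v ∈ σ, kappaIdx (p v) L

/-- The cellular cochain differential of `X(K, Λ_α)` on the basis cochain
`y^{Φ^J_σ}` indexed by `b = (σ, J)`:
`d(y^{Φ^J_σ}) = Σ_{σ⊂ω∈K, dim ω = dim σ+1, I_α(ω) ⊆ I_α(σ)∪J}
  κ(i_α(ω∖σ), I_α(σ)∪J) · ε(σ,ω) · y^{Φ^{(I_α(σ)∪J) \ I_α(ω)}_ω}`,
where `ω∖σ` is the vertex `v` of `ω` not in `σ`. -/
noncomputable def dCellCx {V : Type*} [Fintype V] [DecidableEq V] [LinearOrder V]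
    {k : ℕ} (K : Finset (Finset V)) (p : V → Fin k)
    (b : Finset V × Finset (Fin k)) : (Finset V × Finset (Fin k)) →₀ ℤ :=
  ∑ v ∈ Finset.univ.filter
      (fun v => v ∉ b.1 ∧ insert v b.1 ∈ K ∧ p v ∈ b.1.image p ∪ b.2),
    (kappaIdx (p v) (b.1.image p ∪ b.2) * epsSign b.1 v) •
      Finsupp.single (insert v b.1, (b.1.image p ∪ b.2) \ (insert v b.1).image p) (1 : ℤ)

theorem kappaSimp_insert {V : Type*} [DecidableEq V] {k : ℕ} (p : V → Fin k)
    {σ : Finset V} {v : V} (hv : v ∉ σ) (L : Finset (Fin k)) :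
    kappaSimp p (insert v σ) L = kappaSimp p σ L * kappaIdx (p v) L := by
  rw [kappaSimp, kappaSimp, prod_insert hv, mul_comm]

theorem bijOn_prod_sdiff {α β : Type*} [DecidableEq β] (S : Set α) (I : α → Finset β)
    (L : Finset β) :
    Set.BijOn (fun σ => (σ, L \ I σ)) {σ | σ ∈ S ∧ I σ ⊆ L}
      {b | b.1 ∈ S ∧ Disjoint b.2 (I b.1) ∧ I b.1 ∪ b.2 = L} := by
  refine ⟨?_, fun σ _ τ _ h => congrArg Prod.fst h, ?_⟩
  · rintro σ ⟨hσS, hσL⟩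
    exact ⟨hσS, sdiff_disjoint, union_sdiff_of_subset hσL⟩
  · rintro ⟨σ, J⟩ ⟨hσS, hdisj, rfl⟩
    exact ⟨σ, ⟨hσS, subset_union_left⟩, by simp [union_sdiff_cancel_left hdisj.symm]⟩

theorem dCellCx_sdiff_image {V : Type*} [Fintype V] [DecidableEq V] [LinearOrder V] {k : ℕ}
    (K : Finset (Finset V)) (p : V → Fin k) {L : Finset (Fin k)} {σ : Finset V}
    (hσL : σ.image p ⊆ L) :
    dCellCx K p (σ, L \ σ.image p) =
      ∑ v ∈ univ.filter (fun v => v ∉ σ ∧ insert v σ ∈ K ∧ (insert v σ).image p ⊆ L),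
        (kappaIdx (p v) L * epsSign σ v) •
          Finsupp.single ((insert v σ, L \ (insert v σ).image p) :
            Finset V × Finset (Fin k)) (1 : ℤ) := by
  have hL : σ.image p ∪ (L \ σ.image p) = L := union_sdiff_of_subset hσL
  have hfilter : ∀ v, (v ∉ σ ∧ insert v σ ∈ K ∧ p v ∈ L) ↔
      (v ∉ σ ∧ insert v σ ∈ K ∧ (insert v σ).image p ⊆ L) := by
    simp [image_insert, insert_subset_iff, hσL]
  simp only [dCellCx, hL, hfilter]

theorem stmt15_general {V : Type*} [Fintype V] [DecidableEq V] [LinearOrder V] {k : ℕ}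
    (K : Finset (Finset V))
    (p : V → Fin k) (L : Finset (Fin k)) :
    Set.BijOn (fun σ : Finset V => (σ, L \ σ.image p))
        {σ : Finset V | σ ∈ K ∧ σ.image p ⊆ L}
        {b : Finset V × Finset (Fin k) |
          b.1 ∈ K ∧ Disjoint b.2 (b.1.image p) ∧ b.1.image p ∪ b.2 = L} ∧
      ∀ σ : Finset V, σ ∈ K → σ.image p ⊆ L →
        kappaSimp p σ L • dCellCx K p (σ, L \ σ.image p) =
          ∑ v ∈ Finset.univ.filter
              (fun v => v ∉ σ ∧ insert v σ ∈ K ∧ (insert v σ).image p ⊆ L),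
            (kappaSimp p (insert v σ) L * epsSign σ v) •
              Finsupp.single
                ((insert v σ, L \ (insert v σ).image p) :
                  Finset V × Finset (Fin k)) (1 : ℤ) := by
  refine ⟨bijOn_prod_sdiff {σ | σ ∈ K} (image p) L, fun σ _ hσL => ?_⟩
  rw [dCellCx_sdiff_image K p hσL, smul_sum]
  refine sum_congr rfl fun v hv => ?_
  rw [smul_smul, kappaSimp_insert p (mem_filter.mp hv).2.1, mul_assoc]

/-- For each `L ⊆ [k]`, the map `φ̂^L_α` sending `σ*` to
`κ(σ,L) · y^{Φ^{L∖I_α(σ)}_σ}` is a cochain complex isomorphism from the augmented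
simplicial cochain complex of `K_{α,L}` onto `C^{*,L}(X(K,Λ_α))`.  Concretely,
writing `g(σ) = (σ, L \ I_α(σ))` on basis indices:
(i) `g` is a bijection from the simplices of `K_{α,L}` onto the basis
`{(σ,J) : σ ∈ K, J ∩ I_α(σ) = ∅, I_α(σ) ∪ J = L}`;
(ii) the chain-map identity holds — in particular
`κ(σ,L) · d(y^{Φ^{L∖I_α(σ)}_σ})
  = Σ_{σ⊂ω∈K_{α,L}, dim ω = dim σ+1} κ(ω,L) · ε(σ,ω) · y^{Φ^{L∖I_α(ω)}_ω}`. -/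
theorem stmt15 {V : Type*} [Fintype V] [DecidableEq V] [LinearOrder V] {k : ℕ}
    (K : Finset (Finset V))
    (hsub : ∀ σ ∈ K, ∀ τ ⊆ σ, τ ∈ K)
    (p : V → Fin k) (hp : Function.Surjective p) (L : Finset (Fin k)) :
    Set.BijOn (fun σ : Finset V => (σ, L \ σ.image p))
        {σ : Finset V | σ ∈ K ∧ σ.image p ⊆ L}
        {b : Finset V × Finset (Fin k) |
          b.1 ∈ K ∧ Disjoint b.2 (b.1.image p) ∧ b.1.image p ∪ b.2 = L} ∧
      ∀ σ : Finset V, σ ∈ K → σ.image p ⊆ L →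
        kappaSimp p σ L • dCellCx K p (σ, L \ σ.image p) =
          ∑ v ∈ Finset.univ.filter
              (fun v => v ∉ σ ∧ insert v σ ∈ K ∧ (insert v σ).image p ⊆ L),
            (kappaSimp p (insert v σ) L * epsSign σ v) •
              Finsupp.single
                ((insert v σ, L \ (insert v σ).image p) :
                  Finset V × Finset (Fin k)) (1 : ℤ) :=
  stmt15_general K p L
end
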